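/- Let A be a real symmetric n×n matrix and v ∈ ℝⁿ. Then the eigenvalues of A interlace those of A + v vᵗ: if λ₁ ≥ ... ≥ λₙ are the eigenvalues of A and μ₁ ≥ ... ≥ μₙ those of A + vvᵗ, then μ₁ ≥ λ₁ ≥ μ₂ ≥ λ₂ ≥ ... ≥ μₙ ≥ λₙ. -/

import Mathlib

/-!
The eigenvalues of a symmetric operator obey one half of the Courant–Fischer principle: if
`c ‖x‖² ≤ ⟪T x, x⟫` on a subspace of dimension `> i`, then `c ≤ λᵢ`, because that subspace meets
the span of the eigenvectors `eᵢ, eᵢ₊₁, …`, on which `⟪T x, x⟫ ≤ λᵢ ‖x‖²`. Consequently, if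
`⟪T x, x⟫ ≤ ⟪S x, x⟫` on a subspace of codimension `k`, then `λᵢ₊ₖ(T) ≤ λᵢ(S)`.
For `B = A + v vᵀ` we have `⟪A x, x⟫ ≤ ⟪B x, x⟫` everywhere, giving `λᵢ ≤ μᵢ`, and equality on
the hyperplane `v⊥`, giving `μᵢ₊₁ ≤ λᵢ`.
-/

open Matrix Polynomial Module Submodule Finset

theorem LinearIndependent.finrank_span_image {K V ι : Type*} [DivisionRing K] [AddCommGroup V]
    [Module K V] {v : ι → V} (hv : LinearIndependent K v) (s : Finset ι) :
    finrank K (span K (v '' s)) = #s := by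
  rw [Set.image_eq_range]
  exact (finrank_span_eq_card (hv.comp _ Subtype.val_injective)).trans (by simp)

theorem OrthonormalBasis.repr_apply_eq_zero_of_mem_span_image {𝕜 E ι : Type*} [RCLike 𝕜]
    [NormedAddCommGroup E] [InnerProductSpace 𝕜 E] [Fintype ι] (b : OrthonormalBasis ι 𝕜 E)
    {s : Set ι} {x : E} (hx : x ∈ span 𝕜 (b '' s)) {i : ι} (hi : i ∉ s) : b.repr x i = 0 := by
  rw [← b.coe_toBasis, b.toBasis.mem_span_image] at hx
  simpa using Finsupp.notMem_support_iff.mp fun h => hi (hx h)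

namespace LinearMap.IsSymmetric

variable {𝕜 E : Type*} [RCLike 𝕜] [NormedAddCommGroup E] [InnerProductSpace 𝕜 E]
  [FiniteDimensional 𝕜 E] {T : E →ₗ[𝕜] E} {n : ℕ} (hT : T.IsSymmetric) (hn : finrank 𝕜 E = n)

local notation "⟪" x ", " y "⟫" => inner 𝕜 x y

theorem re_inner_apply_self_eq_sum (x : E) :
    RCLike.re ⟪T x, x⟫ =
      ∑ i, hT.eigenvalues hn i * ‖(hT.eigenvectorBasis hn).repr x i‖ ^ 2 := by
  rw [← (hT.eigenvectorBasis hn).repr.inner_map_map, PiLp.inner_apply, map_sum]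
  refine Finset.sum_congr rfl fun i _ => ?_
  rw [hT.eigenvectorBasis_apply_self_apply, ← smul_eq_mul, inner_smul_real_left,
    inner_self_eq_norm_sq_to_K, RCLike.smul_re]
  norm_cast

theorem eigenvalues_mul_norm_sq_le {i : Fin n} {x : E}
    (hx : x ∈ span 𝕜 (hT.eigenvectorBasis hn '' Set.Iic i)) :
    hT.eigenvalues hn i * ‖x‖ ^ 2 ≤ RCLike.re ⟪T x, x⟫ := by
  rw [re_inner_apply_self_eq_sum, ← (hT.eigenvectorBasis hn).repr.norm_map,
    EuclideanSpace.norm_sq_eq, mul_sum]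
  refine Finset.sum_le_sum fun k _ => ?_
  by_cases hk : k ≤ i
  · exact mul_le_mul_of_nonneg_right (hT.eigenvalues_antitone hn hk) (sq_nonneg _)
  · simp [OrthonormalBasis.repr_apply_eq_zero_of_mem_span_image _ hx hk]

theorem re_inner_apply_self_le_eigenvalues_mul {i : Fin n} {x : E}
    (hx : x ∈ span 𝕜 (hT.eigenvectorBasis hn '' Set.Ici i)) :
    RCLike.re ⟪T x, x⟫ ≤ hT.eigenvalues hn i * ‖x‖ ^ 2 := by
  rw [re_inner_apply_self_eq_sum, ← (hT.eigenvectorBasis hn).repr.norm_map,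
    EuclideanSpace.norm_sq_eq, mul_sum]
  refine Finset.sum_le_sum fun k _ => ?_
  by_cases hk : i ≤ k
  · exact mul_le_mul_of_nonneg_right (hT.eigenvalues_antitone hn hk) (sq_nonneg _)
  · simp [OrthonormalBasis.repr_apply_eq_zero_of_mem_span_image _ hx hk]

theorem le_eigenvalues_of_lt_finrank {i : Fin n} {c : ℝ} (W : Submodule 𝕜 E)
    (hW : (i : ℕ) < finrank 𝕜 W) (hc : ∀ x ∈ W, c * ‖x‖ ^ 2 ≤ RCLike.re ⟪T x, x⟫) :
    c ≤ hT.eigenvalues hn i := by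
  set U := span 𝕜 (hT.eigenvectorBasis hn '' Set.Ici i)
  have hU : finrank 𝕜 U = n - i := by
    have := (hT.eigenvectorBasis hn).orthonormal.linearIndependent.finrank_span_image (Ici i)
    rwa [Finset.coe_Ici, Fin.card_Ici] at this
  have hWU : 0 < finrank 𝕜 (W ⊓ U : Submodule 𝕜 E) := by
    have := finrank_sup_add_finrank_inf_eq W U
    have := hn ▸ (W ⊔ U).finrank_le
    omega
  obtain ⟨x, hx, hx0⟩ := exists_mem_ne_zero_of_ne_bot (Submodule.one_le_finrank_iff.mp hWU)
  have hxW : c * ‖x‖ ^ 2 ≤ RCLike.re ⟪T x, x⟫ := hc x (mem_inf.mp hx).1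
  have hxU := hT.re_inner_apply_self_le_eigenvalues_mul hn (mem_inf.mp hx).2
  exact le_of_mul_le_mul_right (hxW.trans hxU) (by positivity)

theorem eigenvalues_le_eigenvalues_of_re_inner_le {S : E →ₗ[𝕜] E} (hS : S.IsSymmetric)
    (K : Submodule 𝕜 E) {k : ℕ} (hK : n ≤ finrank 𝕜 K + k)
    (hTS : ∀ x ∈ K, RCLike.re ⟪T x, x⟫ ≤ RCLike.re ⟪S x, x⟫) {i j : Fin n} (hij : (i : ℕ) + k ≤ j) :
    hT.eigenvalues hn j ≤ hS.eigenvalues hn i := by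
  set V := span 𝕜 (hT.eigenvectorBasis hn '' Set.Iic j)
  have hV : finrank 𝕜 V = j + 1 := by
    have := (hT.eigenvectorBasis hn).orthonormal.linearIndependent.finrank_span_image (Iic j)
    rwa [Finset.coe_Iic, Fin.card_Iic] at this
  refine hS.le_eigenvalues_of_lt_finrank hn (V ⊓ K) ?_ fun x hx => ?_
  · have := finrank_sup_add_finrank_inf_eq V K
    have := hn ▸ (V ⊔ K).finrank_le
    omega
  · exact (hT.eigenvalues_mul_norm_sq_le hn (mem_inf.mp hx).1).trans (hTS x (mem_inf.mp hx).2)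

theorem eigenvalues_eq_of_charpoly_eq {l : Fin n → ℝ} (hl : Antitone l)
    (h : T.charpoly = ∏ i, (X - C (l i : 𝕜))) : hT.eigenvalues hn = l := by
  rw [← List.ofFn_inj, ← hT.sort_roots_charpoly_eq_eigenvalues hn, h, roots_prod _ _ (by
      simp [Finset.prod_ne_zero_iff, X_sub_C_ne_zero])]
  simp only [roots_X_sub_C, Multiset.bind_singleton, Function.comp_def, RCLike.ofReal_re,
    Fin.univ_val_map, Multiset.map_coe, Multiset.coe_sort, List.map_ofFn]
  apply List.mergeSort_of_pairwise
  simpa using fun i j (hij : i < j) => hl hij.le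

end LinearMap.IsSymmetric

theorem Submodule.finrank_le_finrank_orthogonal_span_singleton_add_one {𝕜 E : Type*} [RCLike 𝕜]
    [NormedAddCommGroup E] [InnerProductSpace 𝕜 E] [FiniteDimensional 𝕜 E] (v : E) :
    finrank 𝕜 E ≤ finrank 𝕜 (𝕜 ∙ v)ᗮ + 1 := by
  have hv : finrank 𝕜 (𝕜 ∙ v) ≤ 1 := by simpa using finrank_span_le_card (R := 𝕜) {v}
  calc finrank 𝕜 E = _ := (𝕜 ∙ v).finrank_add_finrank_orthogonal.symm
    _ ≤ 1 + _ := Nat.add_le_add_right hv _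
    _ = _ := add_comm _ _

theorem Matrix.charpoly_toEuclideanLin {𝕜 ι : Type*} [RCLike 𝕜] [Fintype ι] [DecidableEq ι]
    (A : Matrix ι ι 𝕜) : (toEuclideanLin A).charpoly = A.charpoly :=
  charpoly_toLin A (EuclideanSpace.basisFun ι 𝕜).toBasis

theorem Matrix.inner_toEuclideanLin_vecMulVec_self {ι : Type*} [Fintype ι] [DecidableEq ι]
    (v : ι → ℝ) (x : EuclideanSpace ℝ ι) :
    inner ℝ (toEuclideanLin (vecMulVec v v) x) x = inner ℝ (WithLp.toLp 2 v) x ^ 2 := by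
  simp [toLpLin_apply, vecMulVec_mulVec, inner_smul_left, EuclideanSpace.inner_eq_star_dotProduct,
    sq, dotProduct_comm]

/-- Cauchy interlacing for a rank-one update: the eigenvalues of `A` interlace
those of `A + v vᵀ`. -/
theorem interlacing_rank_one_update
    {n : ℕ} (A : Matrix (Fin n) (Fin n) ℝ) (hA : A.IsSymm)
    (v : Fin n → ℝ)
    (l m : Fin n → ℝ) (hl : Antitone l) (hm : Antitone m)
    (hlA : A.charpoly = ∏ i : Fin n, (Polynomial.X - Polynomial.C (l i)))
    (hmB : (A + Matrix.vecMulVec v v).charpoly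
      = ∏ i : Fin n, (Polynomial.X - Polynomial.C (m i))) :
    (∀ i : Fin n, l i ≤ m i) ∧
      (∀ i j : Fin n, (i : ℕ) + 1 = (j : ℕ) → m j ≤ l i) := by
  have hB : (A + vecMulVec v v).IsSymm := hA.add (transpose_vecMulVec v v)
  have hAs := isSymmetric_toEuclideanLin_iff.mpr (isHermitian_iff_isSymm.mpr hA)
  have hBs := isSymmetric_toEuclideanLin_iff.mpr (isHermitian_iff_isSymm.mpr hB)
  have hn := finrank_euclideanSpace_fin (𝕜 := ℝ) (n := n)
  obtain rfl := hAs.eigenvalues_eq_of_charpoly_eq hn hl ((charpoly_toEuclideanLin A).trans hlA)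
  obtain rfl := hBs.eigenvalues_eq_of_charpoly_eq hn hm ((charpoly_toEuclideanLin _).trans hmB)
  set v' : EuclideanSpace ℝ (Fin n) := WithLp.toLp 2 v
  have hquad (x : EuclideanSpace ℝ (Fin n)) :
      inner ℝ (toEuclideanLin (A + vecMulVec v v) x) x
        = inner ℝ (toEuclideanLin A x) x + inner ℝ v' x ^ 2 := by
    rw [map_add, LinearMap.add_apply, inner_add_left, inner_toEuclideanLin_vecMulVec_self]
  have hcodim : n ≤ finrank ℝ (ℝ ∙ v')ᗮ + 1 :=
    hn.symm.trans_le (finrank_le_finrank_orthogonal_span_singleton_add_one v')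
  refine ⟨fun i => hAs.eigenvalues_le_eigenvalues_of_re_inner_le hn hBs ⊤ (k := 0) (by simp)
      (fun x _ => ?_) le_rfl,
    fun i j hij => hBs.eigenvalues_le_eigenvalues_of_re_inner_le hn hAs _ hcodim
      (fun x hx => ?_) hij.le⟩
  · simp only [RCLike.re_to_real, hquad]
    exact le_add_of_nonneg_right (sq_nonneg _)
  · rw [mem_orthogonal_singleton_iff_inner_right] at hx
    simp only [RCLike.re_to_real, hquad, hx]
    simp
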